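/- There exists a polynomial p(t) ∈ ℤ[t] of degree μ̃_n with constant term p(0) = 1 such that, in the field ℚ(t) of rational functions, p(t) = ∏_{i=0}^{n} (1 − t^{d_i})^{(−1)^{n−i}}; that is, the rational function φ_n(t) := ∏_{i=0}^{n} (1 − t^{d_i})^{(−1)^{n−i}} is a polynomial of degree μ̃_n with integer coefficients and constant term 1. -/

import Mathlib

/-!
By induction on `k`, `φ_k` is an integer polynomial `p_k` with `p_k(0) = 1` dividing
`1 - t^{d_k}`. Indeed `φ_{k+1} = (1 - t^{d_{k+1}}) / φ_k`, and since `d_k ∣ d_{k+1}`,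
`p_k ∣ 1 - t^{d_k} ∣ 1 - t^{d_{k+1}}`; the cofactor `p_{k+1}` then satisfies
`p_k p_{k+1} = 1 - t^{d_{k+1}}`, so its degree is `d_{k+1} - μ̃_k = μ̃_{k+1}`, its constant
term is `1`, and it divides `1 - t^{d_{k+1}}`.
-/

open Finset Matrix Polynomial FreeAbelianGroup

/-- `d k = a 1 * a 2 * ⋯ * a k`, with `d 0 = 1`. -/
def chainD (a : ℕ → ℕ) (k : ℕ) : ℕ := ∏ i ∈ Finset.Icc 1 k, a i

/-- `μ̃ 0 = 1`, `μ̃ k = d k - μ̃ (k-1)`. -/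
def chainMu (a : ℕ → ℕ) : ℕ → ℤ
  | 0 => 1
  | k + 1 => (chainD a (k + 1) : ℤ) - chainMu a k

/-- `φ_n(t) = ∏_{i=0}^{n} (1 - t^{d_i})^{(-1)^{n-i}}` as a rational function over `ℚ`. -/
noncomputable def chainPhi (a : ℕ → ℕ) (n : ℕ) : RatFunc ℚ :=
  ∏ i ∈ Finset.range (n + 1),
    ((1 : RatFunc ℚ) - RatFunc.X ^ (chainD a i)) ^ ((-1 : ℤ) ^ (n - i))

/-- the regular nilpotent `μ × μ` matrix -/
def nilpN (μ : ℕ) : Matrix (Fin μ) (Fin μ) ℚ :=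
  Matrix.of fun i j => if (j : ℕ) = (i : ℕ) + 1 then 1 else 0

/-- `χ = ∑_{i=0}^{μ-1} c_i N^i` -/
noncomputable def chiMat (μ : ℕ) (c : ℕ → ℚ) : Matrix (Fin μ) (Fin μ) ℚ :=
  ∑ i ∈ Finset.range μ, c i • (nilpN μ) ^ i

/-- the companion-type matrix `M₁`: `(M₁)_{i,1} = -c'_i`, `(M₁)_{i,i+1} = 1` (1-based). -/
def M1mat (μ : ℕ) (c' : ℕ → ℚ) : Matrix (Fin μ) (Fin μ) ℚ :=
  Matrix.of fun i j =>
    (if (j : ℕ) = 0 then -c' ((i : ℕ) + 1) else 0) +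
    (if (j : ℕ) = (i : ℕ) + 1 then 1 else 0)

namespace Polynomial

variable {R : Type*}

theorem one_sub_X_pow_dvd_one_sub_X_pow [CommRing R] {m k : ℕ} (h : m ∣ k) :
    (1 - X ^ m : R[X]) ∣ 1 - X ^ k := by
  obtain ⟨j, rfl⟩ := h
  simpa [pow_mul] using sub_dvd_pow_sub_pow (1 : R[X]) (X ^ m) j

theorem natDegree_one_sub_X_pow [CommRing R] [Nontrivial R] (d : ℕ) :
    (1 - X ^ d : R[X]).natDegree = d := by
  rw [← neg_sub, natDegree_neg, ← C_1, natDegree_X_pow_sub_C]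

theorem coeff_zero_one_sub_X_pow [CommRing R] {d : ℕ} (hd : d ≠ 0) :
    (1 - X ^ d : R[X]).coeff 0 = 1 := by
  simp [coeff_X_pow, Ne.symm hd]

theorem exists_mul_eq_one_sub_X_pow [CommRing R] [IsDomain R] {p : R[X]} {d : ℕ} (hd : d ≠ 0)
    (hp : p.coeff 0 = 1) (hdvd : p ∣ 1 - X ^ d) :
    ∃ r : R[X], p * r = 1 - X ^ d ∧ r.coeff 0 = 1 ∧ p.natDegree + r.natDegree = d := by
  obtain ⟨r, hr⟩ := hdvd
  have hne : (1 - X ^ d : R[X]) ≠ 0 := by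
    intro h
    simpa [h] using coeff_zero_one_sub_X_pow (R := R) hd
  have hr0 : r ≠ 0 := by rintro rfl; exact hne (by simpa using hr)
  have hp0 : p ≠ 0 := by rintro rfl; simp at hp
  refine ⟨r, hr.symm, ?_, ?_⟩
  · have h := congrArg (coeff · 0) hr
    rw [mul_coeff_zero, hp, one_mul, coeff_zero_one_sub_X_pow hd] at h
    exact h.symm
  · rw [← natDegree_mul hp0 hr0, ← hr, natDegree_one_sub_X_pow]

end Polynomial

noncomputable def intPolyToRatFunc : ℤ[X] →+* RatFunc ℚ :=
  (algebraMap ℚ[X] (RatFunc ℚ)).comp (mapRingHom (Int.castRingHom ℚ))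

theorem intPolyToRatFunc_injective : Function.Injective intPolyToRatFunc :=
  (RatFunc.algebraMap_injective ℚ).comp (map_injective _ Int.cast_injective)

theorem intPolyToRatFunc_one_sub_X_pow (d : ℕ) :
    intPolyToRatFunc (1 - X ^ d) = 1 - RatFunc.X ^ d := by
  simp [intPolyToRatFunc, RatFunc.algebraMap_X]

theorem chainD_zero (a : ℕ → ℕ) : chainD a 0 = 1 := rfl

theorem chainD_succ (a : ℕ → ℕ) (k : ℕ) : chainD a (k + 1) = chainD a k * a (k + 1) :=
  prod_Icc_succ_top (Nat.le_add_left 1 k) a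

theorem chainD_ne_zero {a : ℕ → ℕ} {k : ℕ} (ha : ∀ i ∈ Icc 1 k, a i ≠ 0) : chainD a k ≠ 0 :=
  prod_ne_zero_iff.mpr ha

theorem chainPhi_zero (a : ℕ → ℕ) : chainPhi a 0 = 1 - RatFunc.X := by
  simp [chainPhi, chainD_zero]

theorem chainPhi_succ (a : ℕ → ℕ) (k : ℕ) :
    chainPhi a (k + 1) = (1 - RatFunc.X ^ chainD a (k + 1)) * (chainPhi a k)⁻¹ := by
  rw [chainPhi, prod_range_succ, Nat.sub_self, pow_zero, zpow_one, mul_comm, chainPhi,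
    ← prod_inv_distrib]
  congr 1
  refine prod_congr rfl fun i hi => ?_
  rw [Nat.sub_add_comm (mem_range_succ_iff.mp hi), pow_succ, mul_neg_one, _root_.zpow_neg]

theorem exists_intPoly_eq_chainPhi {a : ℕ → ℕ} {k : ℕ} (ha : ∀ i ∈ Icc 1 k, a i ≠ 0) :
    ∃ p : ℤ[X], (p.natDegree : ℤ) = chainMu a k ∧ p.coeff 0 = 1 ∧
      intPolyToRatFunc p = chainPhi a k ∧ p ∣ 1 - X ^ chainD a k := by
  induction k with
  | zero =>
    refine ⟨1 - X, ?_, by simp, ?_, by simp [chainD_zero]⟩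
    · simpa [chainMu] using natDegree_one_sub_X_pow (R := ℤ) 1
    · simpa [chainPhi_zero] using intPolyToRatFunc_one_sub_X_pow 1
  | succ k ih =>
    obtain ⟨p, hdeg, hp0, hφ, hdvd⟩ :=
      ih fun i hi => ha i (Icc_subset_Icc_right k.le_succ hi)
    have hd : chainD a (k + 1) ≠ 0 := chainD_ne_zero ha
    have hdvd' : p ∣ 1 - X ^ chainD a (k + 1) :=
      hdvd.trans (one_sub_X_pow_dvd_one_sub_X_pow ⟨a (k + 1), chainD_succ a k⟩)
    obtain ⟨r, hpr, hr0, hdeg'⟩ := exists_mul_eq_one_sub_X_pow hd hp0 hdvd'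
    have hφ0 : chainPhi a k ≠ 0 := by
      rw [← hφ, ← map_zero intPolyToRatFunc]
      exact intPolyToRatFunc_injective.ne (by rintro rfl; simp at hp0)
    refine ⟨r, by simp only [chainMu]; omega, hr0, ?_, Dvd.intro_left p hpr⟩
    rw [chainPhi_succ, ← intPolyToRatFunc_one_sub_X_pow, ← hpr, map_mul, hφ,
      mul_comm, inv_mul_cancel_left₀ hφ0]

theorem stmt_5_general (n : ℕ) (a : ℕ → ℕ) (ha : ∀ i, 1 ≤ i → i ≤ n → 2 ≤ a i) :
    ∃ p : Polynomial ℤ,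
      p.natDegree = (chainMu a n).toNat ∧
      p.coeff 0 = 1 ∧
      algebraMap (Polynomial ℚ) (RatFunc ℚ) (p.map (Int.castRingHom ℚ)) = chainPhi a n := by
  obtain ⟨p, hdeg, hp0, hφ, -⟩ := exists_intPoly_eq_chainPhi (a := a) (k := n) fun i hi => by
    have := ha i (mem_Icc.mp hi).1 (mem_Icc.mp hi).2
    omega
  exact ⟨p, by rw [← hdeg, Int.toNat_natCast], hp0, hφ⟩

/-- there exists `p(t) ∈ ℤ[t]` of degree `μ̃_n` with `p(0) = 1` such that,
in `ℚ(t)`, `p(t) = ∏_{i=0}^{n} (1 − t^{d_i})^{(−1)^{n−i}}`. -/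
theorem stmt_5 (n : ℕ) (hn : 1 ≤ n) (a : ℕ → ℕ) (ha : ∀ i, 1 ≤ i → i ≤ n → 2 ≤ a i) :
    ∃ p : Polynomial ℤ,
      p.natDegree = (chainMu a n).toNat ∧
      p.coeff 0 = 1 ∧
      algebraMap (Polynomial ℚ) (RatFunc ℚ) (p.map (Int.castRingHom ℚ)) = chainPhi a n :=
  stmt_5_general n a ha
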